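/- Let φ_0 : [a,b] → ℝ be continuous and define the Picard iterates φ_n(t) = λ ∫_a^t K(t,η) φ_{n-1}(η) dη + f(t) for n ≥ 1. Then for every n ≥ 1 and t ∈ [a,b], |φ_n(t) - φ_{n-1}(t)| ≤ |λ|^n L M^n (t-a)^n / n! + |λ|^{n-1} N M^{n-1} (t-a)^{n-1} / (n-1)!, where L = sup_{[a,b]} |φ_0|, M = sup_Ω |K|, and N = sup_{[a,b]} |f - φ_0|. -/

import Mathlib

open MeasureTheory intervalIntegral Set

/-- The Picard iterates of the Volterra equation of the second kind:
`φₙ(t) = λ ∫_a^t K(t,η) φ_{n-1}(η) dη + f(t)` for `n ≥ 1`, starting from `φ₀`. -/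
noncomputable def picard (K : ℝ → ℝ → ℝ) (f : ℝ → ℝ) (lam a : ℝ) (φ₀ : ℝ → ℝ) :
    ℕ → ℝ → ℝ
  | 0 => φ₀
  | n + 1 => fun t => lam * (∫ η in a..t, K t η * picard K f lam a φ₀ n η) + f t

/-!
Writing `ψₙ = φₙ₊₁ - φₙ`, linearity of the integral gives `ψₙ₊₁(t) = λ ∫_a^t K(t,η) ψₙ(η) dη`,
while `ψ₀(t) = λ ∫_a^t K(t,η) φ₀(η) dη + (f - φ₀)(t)` is bounded by `|λ| M L (t-a) + N`.
Each further step multiplies the bound by `|λ| M` and integrates it from `a`, which turns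
`(t-a)ᵏ/k!` into `(t-a)ᵏ⁺¹/(k+1)!`. The linearity step needs the iterates to be integrable; to
get it, `K`, `f` and `φ₀` are first replaced by continuous extensions (Tietze) from `Ω` and
`[a,b]`, which changes no iterate on `[a,b]`.
-/

theorem ContinuousOn.exists_continuous_extension {X : Type*} [TopologicalSpace X]
    [NormalSpace X] {s : Set X} (hs : IsClosed s) {f : X → ℝ} (hf : ContinuousOn f s) :
    ∃ g : X → ℝ, Continuous g ∧ EqOn g f s := by
  obtain ⟨g, hg⟩ := ContinuousMap.exists_restrict_eq hs ⟨s.domRestrict f, hf.domRestrict⟩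
  exact ⟨g, g.continuous, fun x hx => ContinuousMap.congr_fun hg ⟨x, hx⟩⟩

theorem isCompact_setOf_le_snd_le_fst_le (a b : ℝ) :
    IsCompact {p : ℝ × ℝ | a ≤ p.2 ∧ p.2 ≤ p.1 ∧ p.1 ≤ b} := by
  refine (isCompact_Icc.prod isCompact_Icc).of_isClosed_subset ?_
    fun p hp => ⟨⟨hp.1.trans hp.2.1, hp.2.2⟩, ⟨hp.1, hp.2.1.trans hp.2.2⟩⟩
  exact (isClosed_le continuous_const continuous_snd).inter
    ((isClosed_le continuous_snd continuous_fst).inter (isClosed_le continuous_fst continuous_const))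

theorem integral_mul_sub_pow_div_factorial (a t c : ℝ) (k : ℕ) :
    ∫ η in a..t, c * (η - a) ^ k / k.factorial = c * (t - a) ^ (k + 1) / (k + 1).factorial := by
  rw [intervalIntegral.integral_div, intervalIntegral.integral_const_mul,
    intervalIntegral.integral_comp_sub_right (· ^ k) a, integral_pow, Nat.factorial_succ]
  push_cast
  field_simp
  ring

theorem abs_integral_mul_le_of_abs_le {k g B : ℝ → ℝ} {a t M : ℝ} (hat : a ≤ t)
    (hk : ∀ η ∈ Icc a t, |k η| ≤ M) (hg : ∀ η ∈ Icc a t, |g η| ≤ B η)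
    (hB : IntervalIntegrable B volume a t) :
    |∫ η in a..t, k η * g η| ≤ M * ∫ η in a..t, B η := by
  have hM : 0 ≤ M := (abs_nonneg _).trans (hk t ⟨hat, le_rfl⟩)
  rw [← Real.norm_eq_abs, ← intervalIntegral.integral_const_mul]
  refine norm_integral_le_of_norm_le hat (ae_of_all _ fun η hη => ?_) (hB.const_mul M)
  rw [Real.norm_eq_abs, abs_mul]
  exact mul_le_mul (hk η (Ioc_subset_Icc_self hη)) (hg η (Ioc_subset_Icc_self hη))
    (abs_nonneg _) hM

section Picard

variable {K : ℝ → ℝ → ℝ} {f φ₀ : ℝ → ℝ} {lam a : ℝ}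

theorem picard_eqOn_of_eqOn {b : ℝ} {K' : ℝ → ℝ → ℝ} {f' φ₀' : ℝ → ℝ}
    (hK : ∀ t ∈ Icc a b, ∀ η ∈ Icc a t, K' t η = K t η) (hf : EqOn f' f (Icc a b))
    (hφ₀ : EqOn φ₀' φ₀ (Icc a b)) :
    ∀ n, EqOn (picard K' f' lam a φ₀' n) (picard K f lam a φ₀ n) (Icc a b)
  | 0 => hφ₀
  | n + 1 => fun t ht => by
    have hint : EqOn (fun η => K' t η * picard K' f' lam a φ₀' n η)
        (fun η => K t η * picard K f lam a φ₀ n η) (uIcc a t) := fun η hη => by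
      rw [uIcc_of_le ht.1] at hη
      simp only [hK t ht η hη, picard_eqOn_of_eqOn hK hf hφ₀ n ⟨hη.1, hη.2.trans ht.2⟩]
    simp only [picard, integral_congr hint, hf ht]

variable (hK : Continuous fun p : ℝ × ℝ => K p.1 p.2) (hf : Continuous f)
  (hφ₀ : Continuous φ₀)
include hK hf hφ₀

theorem continuous_picard : ∀ n, Continuous (picard K f lam a φ₀ n)
  | 0 => hφ₀
  | n + 1 => by
    have hφn := continuous_picard n
    exact (continuous_const.mul (continuous_parametric_intervalIntegral_of_continuous
      (by fun_prop) continuous_id)).add hf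

theorem picard_succ_succ_sub (n : ℕ) (t : ℝ) :
    picard K f lam a φ₀ (n + 2) t - picard K f lam a φ₀ (n + 1) t =
      lam * ∫ η in a..t, K t η * (picard K f lam a φ₀ (n + 1) η - picard K f lam a φ₀ n η) := by
  have hφn₁ := continuous_picard hK hf hφ₀ (lam := lam) (a := a) (n + 1)
  have hφn := continuous_picard hK hf hφ₀ (lam := lam) (a := a) n
  simp only [mul_sub]
  rw [integral_sub ((by fun_prop : Continuous _).intervalIntegrable _ _)
    ((by fun_prop : Continuous _).intervalIntegrable _ _)]
  simp only [picard]
  ring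

theorem abs_picard_succ_sub_le {b L M N : ℝ} (hKM : ∀ t ∈ Icc a b, ∀ η ∈ Icc a t, |K t η| ≤ M)
    (hL : ∀ t ∈ Icc a b, |φ₀ t| ≤ L) (hN : ∀ t ∈ Icc a b, |f t - φ₀ t| ≤ N) :
    ∀ n : ℕ, ∀ t ∈ Icc a b,
      |picard K f lam a φ₀ (n + 1) t - picard K f lam a φ₀ n t| ≤
        |lam| ^ (n + 1) * L * M ^ (n + 1) * (t - a) ^ (n + 1) / (n + 1).factorial +
          |lam| ^ n * N * M ^ n * (t - a) ^ n / n.factorial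
  | 0, t, ht => by
    have hIcc : Icc a t ⊆ Icc a b := Icc_subset_Icc_right ht.2
    have hint := abs_integral_mul_le_of_abs_le ht.1 (hKM t ht) (fun η hη => hL η (hIcc hη))
      (intervalIntegrable_const (c := L))
    calc |picard K f lam a φ₀ 1 t - picard K f lam a φ₀ 0 t|
        = |lam * (∫ η in a..t, K t η * φ₀ η) + (f t - φ₀ t)| := by rw [← add_sub_assoc]; rfl
      _ ≤ |lam| * |∫ η in a..t, K t η * φ₀ η| + |f t - φ₀ t| := by
        rw [← abs_mul]; exact abs_add_le _ _
      _ ≤ |lam| * (M * ∫ _ in a..t, L) + N := by gcongr; exact hN t ht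
      _ = _ := by
        simp only [intervalIntegral.integral_const, smul_eq_mul, zero_add, pow_one, pow_zero,
          Nat.factorial_one, Nat.factorial_zero, Nat.cast_one, div_one]
        ring
  | n + 1, t, ht => by
    have hIcc : Icc a t ⊆ Icc a b := Icc_subset_Icc_right ht.2
    have hint := abs_integral_mul_le_of_abs_le ht.1 (hKM t ht)
      (fun η hη => abs_picard_succ_sub_le hKM hL hN n η (hIcc hη))
      ((by fun_prop : Continuous _).intervalIntegrable _ _)
    calc |picard K f lam a φ₀ (n + 2) t - picard K f lam a φ₀ (n + 1) t|
        ≤ |lam| * (M * ∫ η in a..t, ( |lam| ^ (n + 1) * L * M ^ (n + 1) * (η - a) ^ (n + 1) /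
            (n + 1).factorial + |lam| ^ n * N * M ^ n * (η - a) ^ n / n.factorial)) := by
          rw [picard_succ_succ_sub hK hf hφ₀, abs_mul]; gcongr
      _ = _ := by
        rw [integral_add ((by fun_prop : Continuous _).intervalIntegrable _ _)
          ((by fun_prop : Continuous _).intervalIntegrable _ _),
          integral_mul_sub_pow_div_factorial, integral_mul_sub_pow_div_factorial]
        ring

end Picard

theorem picard_difference_bound_general
    (a b : ℝ) (K : ℝ → ℝ → ℝ) (f : ℝ → ℝ) (lam : ℝ)
    (hK : ContinuousOn (fun p : ℝ × ℝ => K p.1 p.2)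
      {p : ℝ × ℝ | a ≤ p.2 ∧ p.2 ≤ p.1 ∧ p.1 ≤ b})
    (hf : ContinuousOn f (Set.Icc a b))
    (φ₀ : ℝ → ℝ) (hφ₀ : ContinuousOn φ₀ (Set.Icc a b))
    (L M N : ℝ)
    (hL : L = sSup ((fun t => |φ₀ t|) '' Set.Icc a b))
    (hM : M = sSup ((fun p : ℝ × ℝ => |K p.1 p.2|) ''
      {p : ℝ × ℝ | a ≤ p.2 ∧ p.2 ≤ p.1 ∧ p.1 ≤ b}))
    (hN : N = sSup ((fun t => |f t - φ₀ t|) '' Set.Icc a b)) :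
    ∀ n : ℕ, ∀ t ∈ Set.Icc a b,
      |picard K f lam a φ₀ (n + 1) t - picard K f lam a φ₀ n t| ≤
        |lam| ^ (n + 1) * L * M ^ (n + 1) * (t - a) ^ (n + 1) / (n + 1).factorial +
          |lam| ^ n * N * M ^ n * (t - a) ^ n / n.factorial := by
  have hΩ := isCompact_setOf_le_snd_le_fst_le a b
  obtain ⟨K', hK'c, hK'e⟩ := hK.exists_continuous_extension hΩ.isClosed
  obtain ⟨f', hf'c, hf'e⟩ := hf.exists_continuous_extension isClosed_Icc
  obtain ⟨φ₀', hφ₀'c, hφ₀'e⟩ := hφ₀.exists_continuous_extension isClosed_Icc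
  have hKe : ∀ t ∈ Icc a b, ∀ η ∈ Icc a t, K' (t, η) = K t η :=
    fun t ht η hη => hK'e ⟨hη.1, hη.2, ht.2⟩
  have hKM : ∀ t ∈ Icc a b, ∀ η ∈ Icc a t, |K' (t, η)| ≤ M := fun t ht η hη => by
    rw [hKe t ht η hη, hM]
    exact le_csSup (hΩ.bddAbove_image hK.abs) ⟨(t, η), ⟨hη.1, hη.2, ht.2⟩, rfl⟩
  have hLb : ∀ t ∈ Icc a b, |φ₀' t| ≤ L := fun t ht => by
    rw [hφ₀'e ht, hL]
    exact le_csSup (isCompact_Icc.bddAbove_image hφ₀.abs) ⟨t, ht, rfl⟩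
  have hNb : ∀ t ∈ Icc a b, |f' t - φ₀' t| ≤ N := fun t ht => by
    rw [hf'e ht, hφ₀'e ht, hN]
    exact le_csSup (isCompact_Icc.bddAbove_image (hf.sub hφ₀).abs) ⟨t, ht, rfl⟩
  intro n t ht
  have heq := picard_eqOn_of_eqOn (lam := lam) hKe hf'e hφ₀'e
  rw [← heq (n + 1) ht, ← heq n ht]
  exact abs_picard_succ_sub_le hK'c hf'c hφ₀'c hKM hLb hNb n t ht

/-- Key estimate for Picard iterates (continuous case `T = ℝ`, `hₙ(t,s) = (t-s)ⁿ/n!`):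
for every `n ≥ 1` and `t ∈ [a,b]`,
`|φₙ(t) - φ_{n-1}(t)| ≤ |λ|ⁿ L Mⁿ (t-a)ⁿ/n! + |λ|^{n-1} N M^{n-1} (t-a)^{n-1}/(n-1)!`,
where `L = sup |φ₀|`, `M = sup_Ω |K|` and `N = sup |f - φ₀|`. -/
theorem picard_difference_bound
    (a b : ℝ) (hab : a < b) (K : ℝ → ℝ → ℝ) (f : ℝ → ℝ) (lam : ℝ)
    (hK : ContinuousOn (fun p : ℝ × ℝ => K p.1 p.2)
      {p : ℝ × ℝ | a ≤ p.2 ∧ p.2 ≤ p.1 ∧ p.1 ≤ b})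
    (hf : ContinuousOn f (Set.Icc a b))
    (φ₀ : ℝ → ℝ) (hφ₀ : ContinuousOn φ₀ (Set.Icc a b))
    (L M N : ℝ)
    (hL : L = sSup ((fun t => |φ₀ t|) '' Set.Icc a b))
    (hM : M = sSup ((fun p : ℝ × ℝ => |K p.1 p.2|) ''
      {p : ℝ × ℝ | a ≤ p.2 ∧ p.2 ≤ p.1 ∧ p.1 ≤ b}))
    (hN : N = sSup ((fun t => |f t - φ₀ t|) '' Set.Icc a b)) :
    ∀ n : ℕ, ∀ t ∈ Set.Icc a b,
      |picard K f lam a φ₀ (n + 1) t - picard K f lam a φ₀ n t| ≤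
        |lam| ^ (n + 1) * L * M ^ (n + 1) * (t - a) ^ (n + 1) / (n + 1).factorial +
          |lam| ^ n * N * M ^ n * (t - a) ^ n / n.factorial :=
  picard_difference_bound_general a b K f lam hK hf φ₀ hφ₀ L M N hL hM hN
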